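/- arXiv:2404.13496 — 5 statements merged into one kernel-verified Lean document; each statement's English description precedes it below -/
import Mathlib

section
/- Let x_0 ∈ ℝ, let n ≥ 1, let β_1, …, β_n ∈ [0,1], and let Z_1, …, Z_n be independent real random variables on a probability space (Ω, μ), each with law the standard Gaussian measure gaussianReal 0 1. Define the random variables X_0 = x_0 (constant) and X_i = √(1−β_i) · X_{i−1} + √β_i · Z_i for 1 ≤ i ≤ n. Then the law of X_n under μ is the Gaussian measure with mean √(ᾱ_n) x_0 and variance 1 − ᾱ_n, where ᾱ_n = ∏_{i=1}^{n} (1 − β_i). -/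
/-!
By induction on `k`: if `X_{k-1}` has law `N(√ᾱ x₀, 1 - ᾱ)` and is independent of `Z_k`, then
`√(1-β) X_{k-1} + √β Z_k` is Gaussian with mean `√(ᾱ(1-β)) x₀` and variance
`(1-β)(1-ᾱ) + β = 1 - ᾱ(1-β)`. The independence holds because `X_{k-1}` is measurable with
respect to `σ(Z_1, …, Z_{k-1})`, which is independent of `σ(Z_k)`.
-/

open MeasureTheory ProbabilityTheory Finset Real
open scoped NNReal

section

variable {Ω : Type*} {mΩ : MeasurableSpace Ω} {μ : Measure Ω}

lemma ProbabilityTheory.iIndepFun.indepFun_of_measurable_iSup {ι β γ : Type*}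
    {mβ : MeasurableSpace β} {mγ : MeasurableSpace γ} {Z : ι → Ω → β} (hZ : iIndepFun Z μ)
    (hZm : ∀ i, Measurable (Z i)) {S : Set ι} {j : ι} (hj : j ∉ S) {Y : Ω → γ}
    (hY : Measurable[⨆ i ∈ S, mβ.comap (Z i)] Y) : Y ⟂ᵢ[μ] Z j := by
  have h := indep_iSup_of_disjoint (fun i => (hZm i).comap_le) hZ.iIndep
    (Set.disjoint_singleton_right.2 hj)
  rw [IndepFun_iff_Indep]
  exact indep_of_indep_of_le_left (indep_of_indep_of_le_right h
    (le_iSup₂ (f := fun i (_ : i ∈ ({j} : Set ι)) => mβ.comap (Z i)) j rfl)) hY.comap_le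

lemma measurable_iSup_comap_of_linear_recursion {n : ℕ} {a b : ℕ → ℝ} {x₀ : ℝ} {Z X : ℕ → Ω → ℝ}
    (hX0 : X 0 = fun _ => x₀)
    (hXrec : ∀ i, 1 ≤ i → i ≤ n → X i = fun ω => a i * X (i - 1) ω + b i * Z i ω) :
    ∀ k ≤ n, Measurable[⨆ i ∈ {i : Fin n | (i : ℕ) < k},
      (inferInstance : MeasurableSpace ℝ).comap (Z (i + 1))] (X k)
  | 0, _ => hX0 ▸ measurable_const
  | k + 1, hk => by
    have hXk := measurable_iSup_comap_of_linear_recursion hX0 hXrec k (by omega)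
    have hZk : Measurable[⨆ i ∈ {i : Fin n | (i : ℕ) < k + 1},
        (inferInstance : MeasurableSpace ℝ).comap (Z (i + 1))] (Z (k + 1)) :=
      (comap_measurable (Z (k + 1))).mono (le_iSup₂ (f := fun (i : Fin n) (_ : (i : ℕ) < k + 1) =>
        (inferInstance : MeasurableSpace ℝ).comap (Z (i + 1))) ⟨k, hk⟩ k.lt_succ_self) le_rfl
    rw [hXrec (k + 1) (by omega) hk, Nat.add_sub_cancel]
    refine ((hXk.mono ?_ le_rfl).const_mul _).add (hZk.const_mul _)
    exact biSup_mono fun i (hi : (i : ℕ) < k) => Nat.lt_succ_of_lt hi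

lemma ProbabilityTheory.IndepFun.hasLaw_const_mul_add_const_mul_gaussianReal {X Y : Ω → ℝ}
    {m₁ m₂ : ℝ} {v₁ v₂ : ℝ≥0} (hX : HasLaw X (gaussianReal m₁ v₁) μ)
    (hY : HasLaw Y (gaussianReal m₂ v₂) μ) (hXY : X ⟂ᵢ[μ] Y) (a b : ℝ) :
    HasLaw (fun ω => a * X ω + b * Y ω) (gaussianReal (a * m₁ + b * m₂)
      (.mk (a ^ 2) (sq_nonneg a) * v₁ + .mk (b ^ 2) (sq_nonneg b) * v₂)) μ := by
  rw [← gaussianReal_conv_gaussianReal]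
  exact (hXY.comp (measurable_const_mul a) (measurable_const_mul b)).hasLaw_fun_add
    (gaussianReal_const_mul hX a) (gaussianReal_const_mul hY b)

lemma hasLaw_sqrt_one_sub_mul_add_sqrt_mul {X Z : Ω → ℝ} {x₀ ᾱ β : ℝ} (hᾱ : ᾱ ≤ 1)
    (hβ0 : 0 ≤ β) (hβ1 : β ≤ 1) (hX : HasLaw X (gaussianReal (√ᾱ * x₀) (1 - ᾱ).toNNReal) μ)
    (hZ : HasLaw Z (gaussianReal 0 1) μ) (hXZ : X ⟂ᵢ[μ] Z) :
    HasLaw (fun ω => √(1 - β) * X ω + √β * Z ω)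
      (gaussianReal (√(ᾱ * (1 - β)) * x₀) (1 - ᾱ * (1 - β)).toNNReal) μ := by
  have hvar : 0 ≤ 1 - ᾱ * (1 - β) := by rcases le_total 0 ᾱ with h | h <;> nlinarith
  convert hXZ.hasLaw_const_mul_add_const_mul_gaussianReal hX hZ √(1 - β) √β using 2
  · rw [mul_zero, add_zero, Real.sqrt_mul' _ (by linarith)]
    ring
  · ext
    push_cast
    rw [Real.sq_sqrt (by linarith), Real.sq_sqrt hβ0, Real.coe_toNNReal _ hvar,
      Real.coe_toNNReal _ (sub_nonneg.2 hᾱ)]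
    ring

lemma hasLaw_gaussianReal_of_noising_recursion [IsProbabilityMeasure μ] {x₀ : ℝ} {n : ℕ}
    {β : ℕ → ℝ} (hβ0 : ∀ i, 1 ≤ i → i ≤ n → 0 ≤ β i) (hβ1 : ∀ i, 1 ≤ i → i ≤ n → β i ≤ 1)
    {Z X : ℕ → Ω → ℝ} (hZ : ∀ i, 1 ≤ i → i ≤ n → HasLaw (Z i) (gaussianReal 0 1) μ)
    (hXZ : ∀ k < n, X k ⟂ᵢ[μ] Z (k + 1)) (hX0 : X 0 = fun _ => x₀)
    (hXrec : ∀ i, 1 ≤ i → i ≤ n →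
      X i = fun ω => √(1 - β i) * X (i - 1) ω + √(β i) * Z i ω) :
    ∀ k ≤ n, HasLaw (X k) (gaussianReal (√(∏ i ∈ Icc 1 k, (1 - β i)) * x₀)
      (1 - ∏ i ∈ Icc 1 k, (1 - β i)).toNNReal) μ
  | 0, _ => by
    rw [hX0]
    exact ⟨aemeasurable_const, by simp [Measure.map_const]⟩
  | k + 1, hk => by
    have hprod : ∏ i ∈ Icc 1 k, (1 - β i) ≤ 1 := by
      refine prod_le_one (fun i hi => ?_) (fun i hi => ?_) <;> obtain ⟨h₁, h₂⟩ := mem_Icc.1 hi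
      · linarith [hβ1 i h₁ (by omega)]
      · linarith [hβ0 i h₁ (by omega)]
    rw [prod_Icc_succ_top (by omega), hXrec (k + 1) (by omega) hk, Nat.add_sub_cancel]
    exact hasLaw_sqrt_one_sub_mul_add_sqrt_mul hprod (hβ0 _ (by omega) hk) (hβ1 _ (by omega) hk)
      (hasLaw_gaussianReal_of_noising_recursion hβ0 hβ1 hZ hXZ hX0 hXrec k (by omega))
      (hZ _ (by omega) hk) (hXZ k hk)

end

theorem law_of_forward_noising_process_general
    {Ω : Type*} [MeasurableSpace Ω] (μ : Measure Ω) [IsProbabilityMeasure μ]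
    (x₀ : ℝ) (n : ℕ) (β : ℕ → ℝ)
    (hβ0 : ∀ i, 1 ≤ i → i ≤ n → 0 ≤ β i) (hβ1 : ∀ i, 1 ≤ i → i ≤ n → β i ≤ 1)
    (Z : ℕ → Ω → ℝ) (hZmeas : ∀ i, Measurable (Z i))
    (hZindep : iIndepFun (m := fun _ : Fin n => (inferInstance : MeasurableSpace ℝ))
      (fun i : Fin n => Z (i + 1)) μ)
    (hZlaw : ∀ i, 1 ≤ i → i ≤ n → Measure.map (Z i) μ = gaussianReal 0 1)
    (X : ℕ → Ω → ℝ) (hX0 : X 0 = fun _ => x₀)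
    (hXrec : ∀ i, 1 ≤ i → i ≤ n →
      X i = fun ω => Real.sqrt (1 - β i) * X (i - 1) ω + Real.sqrt (β i) * Z i ω) :
    Measure.map (X n) μ =
      gaussianReal (Real.sqrt (∏ i ∈ Finset.Icc 1 n, (1 - β i)) * x₀)
        (Real.toNNReal (1 - ∏ i ∈ Finset.Icc 1 n, (1 - β i))) := by
  have hXZ : ∀ k < n, X k ⟂ᵢ[μ] Z (k + 1) := fun k hk =>
    hZindep.indepFun_of_measurable_iSup (fun i => hZmeas _) (j := ⟨k, hk⟩) (lt_irrefl k)
      (measurable_iSup_comap_of_linear_recursion hX0 hXrec k hk.le)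
  exact (hasLaw_gaussianReal_of_noising_recursion hβ0 hβ1
    (fun i h₁ h₂ => ⟨(hZmeas i).aemeasurable, hZlaw i h₁ h₂⟩) hXZ hX0 hXrec n le_rfl).map_eq

/-- The transition law of the discretized forward noising process of a diffusion model:
if `X_0 = x_0` and `X_i = √(1-β_i) X_{i-1} + √(β_i) Z_i` with independent standard Gaussian
noise `Z_1, …, Z_n` and `β_i ∈ [0,1]`, then the law of `X_n` is the Gaussian with mean
`√(ᾱ_n) x_0` and variance `1 - ᾱ_n`, where `ᾱ_n = ∏_{i=1}^n (1-β_i)`. -/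
theorem law_of_forward_noising_process
    {Ω : Type*} [MeasurableSpace Ω] (μ : Measure Ω) [IsProbabilityMeasure μ]
    (x₀ : ℝ) (n : ℕ) (hn : 1 ≤ n) (β : ℕ → ℝ)
    (hβ0 : ∀ i, 1 ≤ i → i ≤ n → 0 ≤ β i) (hβ1 : ∀ i, 1 ≤ i → i ≤ n → β i ≤ 1)
    (Z : ℕ → Ω → ℝ) (hZmeas : ∀ i, Measurable (Z i))
    (hZindep : iIndepFun (m := fun _ : Fin n => (inferInstance : MeasurableSpace ℝ))
      (fun i : Fin n => Z (i + 1)) μ)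
    (hZlaw : ∀ i, 1 ≤ i → i ≤ n → Measure.map (Z i) μ = gaussianReal 0 1)
    (X : ℕ → Ω → ℝ) (hX0 : X 0 = fun _ => x₀)
    (hXrec : ∀ i, 1 ≤ i → i ≤ n →
      X i = fun ω => Real.sqrt (1 - β i) * X (i - 1) ω + Real.sqrt (β i) * Z i ω) :
    Measure.map (X n) μ =
      gaussianReal (Real.sqrt (∏ i ∈ Finset.Icc 1 n, (1 - β i)) * x₀)
        (Real.toNNReal (1 - ∏ i ∈ Finset.Icc 1 n, (1 - β i))) :=
  law_of_forward_noising_process_general μ x₀ n β hβ0 hβ1 Z hZmeas hZindep hZlaw X hX0 hXrec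
end

section
/- Let d ≥ 1, E = EuclideanSpace ℝ (Fin d), ᾱ ∈ (0,1), and k(x_0, x) = (2π(1−ᾱ))^{−d/2} exp(−‖x − √ᾱ x_0‖²/(2(1−ᾱ))). Let p_0 : E → ℝ be measurable with p_0 ≥ 0, and fix x ∈ E. Assume: (i) the functions x_0 ↦ p_0(x_0) k(x_0, x) and x_0 ↦ p_0(x_0) k(x_0, x) · x_0 are (Bochner) integrable; (ii) p_t(x) := ∫ p_0(x_0) k(x_0, x) dx_0 > 0, where p_t(z) := ∫ p_0(x_0) k(x_0, z) dx_0; (iii) p_t has a gradient at x equal to G := ∫ p_0(x_0) · ∇_x k(x_0, x) dx_0 (differentiation under the integral sign holds at x, and x_0 ↦ p_0(x_0) ∇_x k(x_0,x) is integrable). Then the posterior mean x̂_0 := p_t(x)^{−1} · ∫ p_0(x_0) k(x_0, x) · x_0 dx_0 satisfies Tweedie's formula: x̂_0 = (√ᾱ)^{−1} · ( x + (1−ᾱ) · p_t(x)^{−1} · G ), i.e. x̂_0 = (x + (1−ᾱ) ∇ log p_t(x)) / √ᾱ. -/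
open scoped Real
open MeasureTheory

/-!
The Gaussian kernel satisfies `∇ₓ k(x₀, x) = k(x₀, x) (√ᾱ x₀ − x) / (1 − ᾱ)`, so integrating
against `p₀` expresses `G` through the zeroth and first moments of `p₀(x₀) k(x₀, x) dx₀`:
`G = (√ᾱ ∫ p₀ k x₀ − p_t(x) x) / (1 − ᾱ)`. Solving this for the posterior mean gives the formula.
-/

theorem hasGradientAt_const_mul_exp_neg_norm_sub_sq_div
    {F : Type*} [NormedAddCommGroup F] [InnerProductSpace ℝ F] [CompleteSpace F]
    (C σ : ℝ) (c x : F) :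
    HasGradientAt (fun y => C * Real.exp (-‖y - c‖ ^ 2 / (2 * σ)))
      ((σ⁻¹ * (C * Real.exp (-‖x - c‖ ^ 2 / (2 * σ)))) • (c - x)) x := by
  have hprofile := ((hasDerivAt_neg' (‖x - c‖ ^ 2)).div_const (2 * σ)).exp.const_mul C
  rw [hasGradientAt_iff_hasFDerivAt]
  refine (hprofile.comp_hasFDerivAt x ((hasFDerivAt_id x).sub_const c).norm_sq).congr_fderiv ?_
  ext v
  simp only [id_eq, map_sub, ContinuousLinearMap.comp_id, smul_apply,
    sub_apply, coe_innerSL_apply, nsmul_eq_mul, Nat.cast_ofNat, smul_eq_mul,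
    map_smul, InnerProductSpace.toDual_apply_apply]
  ring

theorem tweedie_formula_general
    (d : ℕ) (ᾱ : ℝ) (hᾱ0 : 0 < ᾱ) (hᾱ1 : ᾱ < 1)
    (k : EuclideanSpace ℝ (Fin d) → EuclideanSpace ℝ (Fin d) → ℝ)
    (hk : ∀ x₀ x, k x₀ x = (2 * π * (1 - ᾱ)) ^ (-(d : ℝ) / 2) *
      Real.exp (-‖x - Real.sqrt ᾱ • x₀‖ ^ 2 / (2 * (1 - ᾱ))))
    (p₀ : EuclideanSpace ℝ (Fin d) → ℝ)
    (x : EuclideanSpace ℝ (Fin d))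
    (hint₁ : Integrable (fun x₀ => p₀ x₀ * k x₀ x))
    (hint₂ : Integrable (fun x₀ => (p₀ x₀ * k x₀ x) • x₀))
    (p_t : EuclideanSpace ℝ (Fin d) → ℝ)
    (hpt : ∀ z, p_t z = ∫ x₀, p₀ x₀ * k x₀ z)
    (hptpos : 0 < p_t x)
    (G : EuclideanSpace ℝ (Fin d))
    (hG : G = ∫ x₀, p₀ x₀ • gradient (k x₀) x) :
    (p_t x)⁻¹ • (∫ x₀, (p₀ x₀ * k x₀ x) • x₀) =
      (Real.sqrt ᾱ)⁻¹ • (x + ((1 - ᾱ) * (p_t x)⁻¹) • G) := by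
  have hkgrad : ∀ x₀, gradient (k x₀) x =
      ((1 - ᾱ)⁻¹ * k x₀ x) • (Real.sqrt ᾱ • x₀ - x) := fun x₀ => by
    rw [show k x₀ = _ from funext (hk x₀)]
    exact (hasGradientAt_const_mul_exp_neg_norm_sub_sq_div _ _ _ x).gradient
  have hGmean : G = (1 - ᾱ)⁻¹ •
      (Real.sqrt ᾱ • (∫ x₀, (p₀ x₀ * k x₀ x) • x₀) - p_t x • x) := calc
    G = ∫ x₀, (1 - ᾱ)⁻¹ •
        (Real.sqrt ᾱ • ((p₀ x₀ * k x₀ x) • x₀) - (p₀ x₀ * k x₀ x) • x) := by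
      rw [hG]
      congr 1
      funext x₀
      rw [hkgrad]
      module
    _ = _ := by
      rw [integral_smul, integral_sub, integral_smul, integral_smul_const, ← hpt x]
      exacts [hint₂.smul (Real.sqrt ᾱ), hint₁.smul_const x]
  have hσ : 1 - ᾱ ≠ 0 := sub_ne_zero.2 hᾱ1.ne'
  have hsqrt : Real.sqrt ᾱ ≠ 0 := (Real.sqrt_pos.2 hᾱ0).ne'
  rw [hGmean]
  match_scalars <;> field_simp
  ring

/-- Tweedie's formula for the variance-preserving diffusion model: with Gaussian transition
kernel `k(x₀, x) = (2π(1−ᾱ))^{−d/2} exp(−‖x − √ᾱ x₀‖²/(2(1−ᾱ)))` and prior density `p₀ ≥ 0`,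
if `p_t(x) = ∫ p₀(x₀) k(x₀, x) dx₀ > 0` and differentiation under the integral sign holds at
`x` (the gradient of `p_t` at `x` is `G = ∫ p₀(x₀) ∇_x k(x₀, x) dx₀`), then the posterior mean
`x̂₀ = p_t(x)⁻¹ ∫ p₀(x₀) k(x₀, x) x₀ dx₀` satisfies
`x̂₀ = (x + (1−ᾱ) ∇ log p_t(x)) / √ᾱ`. -/
theorem tweedie_formula
    (d : ℕ) (hd : 1 ≤ d) (ᾱ : ℝ) (hᾱ0 : 0 < ᾱ) (hᾱ1 : ᾱ < 1)
    (k : EuclideanSpace ℝ (Fin d) → EuclideanSpace ℝ (Fin d) → ℝ)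
    (hk : ∀ x₀ x, k x₀ x = (2 * π * (1 - ᾱ)) ^ (-(d : ℝ) / 2) *
      Real.exp (-‖x - Real.sqrt ᾱ • x₀‖ ^ 2 / (2 * (1 - ᾱ))))
    (p₀ : EuclideanSpace ℝ (Fin d) → ℝ) (hp₀meas : Measurable p₀) (hp₀ : ∀ x₀, 0 ≤ p₀ x₀)
    (x : EuclideanSpace ℝ (Fin d))
    (hint₁ : Integrable (fun x₀ => p₀ x₀ * k x₀ x))
    (hint₂ : Integrable (fun x₀ => (p₀ x₀ * k x₀ x) • x₀))
    (p_t : EuclideanSpace ℝ (Fin d) → ℝ)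
    (hpt : ∀ z, p_t z = ∫ x₀, p₀ x₀ * k x₀ z)
    (hptpos : 0 < p_t x)
    (G : EuclideanSpace ℝ (Fin d))
    (hG : G = ∫ x₀, p₀ x₀ • gradient (k x₀) x)
    (hGint : Integrable (fun x₀ => p₀ x₀ • gradient (k x₀) x))
    (hgrad : HasGradientAt p_t G x) :
    (p_t x)⁻¹ • (∫ x₀, (p₀ x₀ * k x₀ x) • x₀) =
      (Real.sqrt ᾱ)⁻¹ • (x + ((1 - ᾱ) * (p_t x)⁻¹) • G) :=
  tweedie_formula_general d ᾱ hᾱ0 hᾱ1 k hk p₀ x hint₁ hint₂ p_t hpt hptpos G hG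
end

section
/- Let (Ω, 𝓕, μ) be a probability space, let β, γ, δ be nonempty standard Borel measurable spaces, and let X_t : Ω → β, X_0 : Ω → γ, Y : Ω → δ be measurable random variables. Assume Y and X_t are conditionally independent given X_0 (conditional independence of the pair of functions given the σ-algebra generated by X_0). Then for μ-almost every ω, the conditional distribution of Y given X_t evaluated at X_t(ω) equals the composition of kernels: (condDistrib Y X_t μ)(X_t(ω)) = ((condDistrib X_0 X_t μ) ∘ₖ (condDistrib Y X_0 μ))(X_t(ω)); that is, the conditional law of Y given X_t is obtained by first drawing X_0 from its conditional law given X_t and then drawing Y from its conditional law given X_0. -/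
/-!
Conditional independence means that `Y` still has conditional law `condDistrib Y X₀ μ (X₀ ω)`
once `X_t` is known as well, so `μ (X_t ∈ s, Y ∈ t) = ∫_{X_t ∈ s} condDistrib Y X₀ μ (X₀ ω) t dμ`.
Disintegrating the law of `(X_t, X₀)` along `X_t` rewrites the right-hand side as the mass of
`s ×ˢ t` under `μ.map X_t ⊗ₘ (condDistrib Y X₀ μ ∘ₖ condDistrib X₀ X_t μ)`. Hence this measure is
the joint law of `(X_t, Y)`, and uniqueness of disintegrations identifies the composite kernel
with `condDistrib Y X_t μ`, `μ.map X_t`-almost everywhere.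
-/

open MeasureTheory ProbabilityTheory Set

section

variable {Ω β γ δ : Type*} {mΩ : MeasurableSpace Ω} {mβ : MeasurableSpace β}
  {mγ : MeasurableSpace γ} {mδ : MeasurableSpace δ} {μ : Measure Ω} [IsFiniteMeasure μ]
  {X : Ω → β} {Y : Ω → δ} {Z : Ω → γ}

lemma setLIntegral_lintegral_condDistrib [StandardBorelSpace γ] [Nonempty γ]
    (hX : Measurable X) (hZ : Measurable Z) {f : γ → ENNReal} (hf : Measurable f)
    {s : Set β} (hs : MeasurableSet s) :
    ∫⁻ b in s, ∫⁻ c, f c ∂condDistrib Z X μ b ∂μ.map X = ∫⁻ ω in X ⁻¹' s, f (Z ω) ∂μ := by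
  have hf_snd : Measurable fun p : β × γ ↦ f p.2 := hf.comp measurable_snd
  calc ∫⁻ b in s, ∫⁻ c, f c ∂condDistrib Z X μ b ∂μ.map X
      = ∫⁻ p in s ×ˢ univ, f p.2 ∂(μ.map X ⊗ₘ condDistrib Z X μ) := by
        rw [Measure.setLIntegral_compProd hf_snd hs .univ]
        simp only [Measure.restrict_univ]
    _ = ∫⁻ p in s ×ˢ univ, f p.2 ∂(μ.map fun ω ↦ (X ω, Z ω)) := by
        rw [compProd_map_condDistrib hZ.aemeasurable]
    _ = ∫⁻ ω in X ⁻¹' s, f (Z ω) ∂μ := by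
        rw [setLIntegral_map (hs.prod .univ) hf_snd (hX.prodMk hZ),
          mk_preimage_prod, preimage_univ, inter_univ]

lemma measure_inter_preimage_eq_setLIntegral_condDistrib_of_condIndepFun
    [StandardBorelSpace Ω] [StandardBorelSpace β] [Nonempty β]
    [StandardBorelSpace δ] [Nonempty δ]
    (hX : Measurable X) (hY : Measurable Y) (hZ : Measurable Z) (hci : Y ⟂ᵢ[Z, hZ; μ] X)
    {s : Set β} (hs : MeasurableSet s) {t : Set δ} (ht : MeasurableSet t) :
    μ (X ⁻¹' s ∩ Y ⁻¹' t) = ∫⁻ ω in X ⁻¹' s, condDistrib Y Z μ (Z ω) t ∂μ := by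
  have hZX : Measurable fun ω ↦ (Z ω, X ω) := hZ.prodMk hX
  have h_eq : ∀ᵐ ω ∂μ, condDistrib Y (fun ω ↦ (Z ω, X ω)) μ (Z ω, X ω) =
      condDistrib Y Z μ (Z ω) :=
    ae_of_ae_map hZX.aemeasurable
      ((condIndepFun_iff_condDistrib_prod_ae_eq_prodMkRight hY hX hZ).mp hci.symm)
  have h_pre : X ⁻¹' s = (fun ω ↦ (Z ω, X ω)) ⁻¹' (univ ×ˢ s) := by
    rw [mk_preimage_prod, preimage_univ, univ_inter]
  have hs' : MeasurableSet (univ ×ˢ s : Set (γ × β)) := MeasurableSet.univ.prod hs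
  rw [h_pre, ← setLIntegral_preimage_condDistrib hZX hY.aemeasurable ht hs']
  exact setLIntegral_congr_fun_ae (hZX hs')
    (h_eq.mono fun ω hω _ ↦ by rw [hω])

lemma map_prod_eq_compProd_comp_condDistrib_of_condIndepFun
    [StandardBorelSpace Ω] [StandardBorelSpace β] [Nonempty β]
    [StandardBorelSpace γ] [Nonempty γ] [StandardBorelSpace δ] [Nonempty δ]
    (hX : Measurable X) (hY : Measurable Y) (hZ : Measurable Z) (hci : Y ⟂ᵢ[Z, hZ; μ] X) :
    μ.map (fun ω ↦ (X ω, Y ω)) = μ.map X ⊗ₘ (condDistrib Y Z μ ∘ₖ condDistrib Z X μ) := by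
  refine Measure.ext_prod fun {s t} hs ht ↦ ?_
  rw [Measure.map_apply (hX.prodMk hY) (hs.prod ht), mk_preimage_prod,
    Measure.compProd_apply_prod hs ht,
    measure_inter_preimage_eq_setLIntegral_condDistrib_of_condIndepFun hX hY hZ hci hs ht,
    ← setLIntegral_lintegral_condDistrib hX hZ (Kernel.measurable_coe _ ht) hs]
  simp_rw [Kernel.comp_apply' _ _ _ ht]

end

/-- Disintegration identity behind diffusion posterior sampling: if the observation `Y` and the
diffused state `X_t` are conditionally independent given the clean state `X₀`, then almost
surely the conditional law of `Y` given `X_t` is obtained by first drawing `X₀` from its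
conditional law given `X_t` and then drawing `Y` from its conditional law given `X₀`:
`condDistrib Y X_t μ (X_t ω) = (condDistrib Y X₀ μ ∘ₖ condDistrib X₀ X_t μ) (X_t ω)`. -/
theorem condDistrib_eq_comp_of_condIndepFun
    {Ω β γ δ : Type*} [MeasurableSpace Ω] [StandardBorelSpace Ω]
    [MeasurableSpace β] [StandardBorelSpace β] [Nonempty β]
    [MeasurableSpace γ] [StandardBorelSpace γ] [Nonempty γ]
    [MeasurableSpace δ] [StandardBorelSpace δ] [Nonempty δ]
    (μ : Measure Ω) [IsProbabilityMeasure μ]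
    (X_t : Ω → β) (X₀ : Ω → γ) (Y : Ω → δ)
    (hXt : Measurable X_t) (hX₀ : Measurable X₀) (hY : Measurable Y)
    (hci : CondIndepFun (MeasurableSpace.comap X₀ inferInstance) hX₀.comap_le Y X_t μ) :
    ∀ᵐ ω ∂μ, condDistrib Y X_t μ (X_t ω) =
      (condDistrib Y X₀ μ ∘ₖ condDistrib X₀ X_t μ) (X_t ω) :=
  ae_of_ae_map hXt.aemeasurable <| condDistrib_ae_eq_of_measure_eq_compProd_of_measurable hXt hY <|
    map_prod_eq_compProd_comp_condDistrib_of_condIndepFun hXt hY hX₀ hci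
end

section
/- Let n ≥ 1 and E = EuclideanSpace ℝ (Fin n). Let p_0 : E → ℝ be measurable with p_0 ≥ 0, let k : E → E → ℝ satisfy k(x_0, x) > 0 for all x_0, x, and define the mixture density p_t(x) := ∫ p_0(x_0) k(x_0, x) dx_0. Let s : E → E be measurable. Assume: (i) for every x, p_t(x) > 0, the map x_0 ↦ p_0(x_0) k(x_0, x) is integrable, and for every x_0 the map z ↦ k(x_0, z) is differentiable at x; (ii) for every x, p_t has a gradient at x equal to ∫ p_0(x_0) · ∇_x k(x_0, x) dx_0, with x_0 ↦ p_0(x_0) ∇_x k(x_0, x) integrable (differentiation under the integral sign); (iii) the function (x_0, x) ↦ p_0(x_0) k(x_0, x) ⟨s(x), ∇_x log k(x_0, x)⟩ is integrable on E × E, where ∇_x log k(x_0, x) := k(x_0, x)^{−1} ∇_x k(x_0, x), and x ↦ p_t(x) ⟨s(x), ∇ log p_t(x)⟩ is integrable, where ∇ log p_t(x) := p_t(x)^{−1} ∇p_t(x). Then ∫ p_t(x) ⟨s(x), ∇ log p_t(x)⟩ dx = ∫ ( ∫ p_0(x_0) k(x_0, x) ⟨s(x), ∇_x log k(x_0, x)⟩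 dx_0 ) dx. -/
/-!
Since `p_t ∇ log p_t = ∇ p_t = ∫ p₀ ∇ₓ k = ∫ p₀ k ∇ₓ log k` (differentiation under the integral
sign), the two integrands already agree pointwise in `x` once the inner product with `s(x)` is
moved inside the `x₀`-integral.
-/

open MeasureTheory
open scoped RealInnerProductSpace

section

variable {E : Type*} [NormedAddCommGroup E] [InnerProductSpace ℝ E]

theorem mul_inner_inv_smul_right {a : ℝ} (ha : a ≠ 0) (v w : E) :
    a * ⟪v, a⁻¹ • w⟫ = ⟪v, w⟫ := by
  rw [real_inner_smul_right, mul_inv_cancel_left₀ ha]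

theorem inner_integral_smul_eq_integral_mul_inner_inv_smul [CompleteSpace E]
    {α : Type*} [MeasurableSpace α] {μ : Measure α} {f c : α → ℝ} {w : α → E}
    (hc : ∀ a, c a ≠ 0) (hfw : Integrable (fun a => f a • w a) μ) (v : E) :
    ⟪v, ∫ a, f a • w a ∂μ⟫ = ∫ a, f a * c a * ⟪v, (c a)⁻¹ • w a⟫ ∂μ := by
  rw [← integral_inner hfw v]
  congr with a
  rw [mul_assoc, mul_inner_inv_smul_right (hc a), real_inner_smul_right]

end

theorem score_matching_cross_term_general
    (n : ℕ)
    (p₀ : EuclideanSpace ℝ (Fin n) → ℝ)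
    (k : EuclideanSpace ℝ (Fin n) → EuclideanSpace ℝ (Fin n) → ℝ)
    (hkpos : ∀ x₀ x, 0 < k x₀ x)
    (p_t : EuclideanSpace ℝ (Fin n) → ℝ)
    (s : EuclideanSpace ℝ (Fin n) → EuclideanSpace ℝ (Fin n))
    -- (i)
    (hptpos : ∀ x, 0 < p_t x)
    -- (ii) differentiation under the integral sign
    (hgradint : ∀ x, Integrable (fun x₀ => p₀ x₀ • gradient (k x₀) x))
    (hgrad : ∀ x, HasGradientAt p_t (∫ x₀, p₀ x₀ • gradient (k x₀) x) x) :
    ∫ x, p_t x * ⟪s x, (p_t x)⁻¹ • gradient p_t x⟫ =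
      ∫ x, ∫ x₀, p₀ x₀ * k x₀ x * ⟪s x, (k x₀ x)⁻¹ • gradient (k x₀) x⟫ := by
  congr with x
  rw [mul_inner_inv_smul_right (hptpos x).ne', (hgrad x).gradient,
    inner_integral_smul_eq_integral_mul_inner_inv_smul (fun x₀ => (hkpos x₀ x).ne') (hgradint x)]

/-- The cross-term identity `S₁(θ) = S₂(θ)` in the proof of equivalence of explicit and
denoising score matching: for a mixture density `p_t(x) = ∫ p₀(x₀) k(x₀, x) dx₀` with positive
transition densities `k(x₀, ·)` and a candidate score model `s`,
`∫ p_t(x) ⟨s(x), ∇ log p_t(x)⟩ dx = ∫∫ p₀(x₀) k(x₀, x) ⟨s(x), ∇_x log k(x₀, x)⟩ dx₀ dx`. -/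
theorem score_matching_cross_term
    (n : ℕ) (hn : 1 ≤ n)
    (p₀ : EuclideanSpace ℝ (Fin n) → ℝ) (hp₀meas : Measurable p₀) (hp₀ : ∀ x₀, 0 ≤ p₀ x₀)
    (k : EuclideanSpace ℝ (Fin n) → EuclideanSpace ℝ (Fin n) → ℝ)
    (hkpos : ∀ x₀ x, 0 < k x₀ x)
    (p_t : EuclideanSpace ℝ (Fin n) → ℝ)
    (hpt : ∀ x, p_t x = ∫ x₀, p₀ x₀ * k x₀ x)
    (s : EuclideanSpace ℝ (Fin n) → EuclideanSpace ℝ (Fin n)) (hs : Measurable s)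
    -- (i)
    (hptpos : ∀ x, 0 < p_t x)
    (hint : ∀ x, Integrable (fun x₀ => p₀ x₀ * k x₀ x))
    (hkdiff : ∀ x₀ x, DifferentiableAt ℝ (k x₀) x)
    -- (ii) differentiation under the integral sign
    (hgradint : ∀ x, Integrable (fun x₀ => p₀ x₀ • gradient (k x₀) x))
    (hgrad : ∀ x, HasGradientAt p_t (∫ x₀, p₀ x₀ • gradient (k x₀) x) x)
    -- (iii)
    (hprodint : Integrable (fun q : EuclideanSpace ℝ (Fin n) × EuclideanSpace ℝ (Fin n) =>
      p₀ q.1 * k q.1 q.2 * ⟪s q.2, (k q.1 q.2)⁻¹ • gradient (k q.1) q.2⟫))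
    (hmargint : Integrable (fun x => p_t x * ⟪s x, (p_t x)⁻¹ • gradient p_t x⟫)) :
    ∫ x, p_t x * ⟪s x, (p_t x)⁻¹ • gradient p_t x⟫ =
      ∫ x, ∫ x₀, p₀ x₀ * k x₀ x * ⟪s x, (k x₀ x)⁻¹ • gradient (k x₀) x⟫ :=
  score_matching_cross_term_general n p₀ k hkpos p_t s hptpos hgradint hgrad
end

section
/- Let n ≥ 1 and E = EuclideanSpace ℝ (Fin n). Let p_0 : E → ℝ be measurable with p_0 ≥ 0, let k : E → E → ℝ satisfy k(x_0, x) > 0 for all x_0, x, and define the mixture density p_t(x) := ∫ p_0(x_0) k(x_0, x) dx_0. Let s : E → E be measurable, and set ∇_x log k(x_0, x) := k(x_0, x)^{−1} ∇_x k(x_0, x) and ∇ log p_t(x) := p_t(x)^{−1} ∇p_t(x). Assume the hypotheses: (i) for every x, p_t(x) > 0, x_0 ↦ p_0(x_0) k(x_0, x) is integrable, and z ↦ k(x_0, z) is differentiable at x for each x_0; (ii) for every x, p_t has gradient at x equal to ∫ p_0(x_0) ∇_x k(x_0, x) dx_0 with the integrand integrable; (iii) the functions x ↦ p_t(x)‖s(x)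 − ∇ log p_t(x)‖², x ↦ p_t(x)‖∇ log p_t(x)‖², and x ↦ p_t(x)‖s(x)‖² are integrable, and the functions (x_0, x) ↦ p_0(x_0) k(x_0, x)‖s(x) − ∇_x log k(x_0, x)‖², (x_0, x) ↦ p_0(x_0) k(x_0, x)‖∇_x log k(x_0, x)‖², and (x_0, x) ↦ p_0(x_0) k(x_0, x)‖s(x)‖², as well as (x_0, x) ↦ p_0(x_0) k(x_0, x) ⟨s(x), ∇_x log k(x_0, x)⟩, are integrable on E × E. Define Ĵ_1(s) := ∫ p_t(x)‖s(x) − ∇ log p_t(x)‖² dx, Ĵ_2(s) := ∫∫ p_0(x_0) k(x_0, x)‖s(x) − ∇_x log k(x_0, x)‖² dx_0 dx, C_1 := ∫ p_t(x)‖∇ log p_t(x)‖² dx, and C_2 := ∫∫ p_0(x_0) k(x_0, x)‖∇_x log k(x_0, x)‖² dx_0 dx. Then Ĵ_1(s) − Ĵ_2(s) = C_1 − C_2; in particular, since C_1 and C_2 do not depend on s, the two score-matching objectives Ĵ_1 and Ĵ_2 differ by a constant and have the same minimizers. -/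
open MeasureTheory
open scoped RealInnerProductSpace

/-!
Expanding the squares, `J₁ − C₁` and `J₂ − C₂` both lose the `s`-independent quadratic term
in the score, leaving `∫ p_t ‖s‖² − 2 ∫ ⟪s, ∇p_t⟫` and
`∫∫ p₀ k ‖s‖² − 2 ∫∫ p₀ ⟪s, ∇k⟫` respectively: the weight `p_t` (resp. `k`) cancels the
inverse in the score. These agree after integrating out `x₀`, because `p_t = ∫ p₀ k` and
`∇p_t = ∫ p₀ ∇k`, and the inner product with `s x` commutes with the integral.
-/

section Pointwise

variable {E : Type*} [NormedAddCommGroup E] [InnerProductSpace ℝ E]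

theorem mul_norm_sub_inv_smul_sq_sub_mul_norm_inv_smul_sq {c : ℝ} (hc : c ≠ 0) (v g : E) :
    c * ‖v - c⁻¹ • g‖ ^ 2 - c * ‖c⁻¹ • g‖ ^ 2 = c * ‖v‖ ^ 2 - 2 * ⟪v, g⟫ := by
  rw [norm_sub_sq_real, real_inner_smul_right]
  field_simp
  ring

theorem mul_mul_norm_sub_inv_smul_sq_sub {a c : ℝ} (hc : c ≠ 0) (v g : E) :
    a * c * ‖v - c⁻¹ • g‖ ^ 2 - a * c * ‖c⁻¹ • g‖ ^ 2 = a * c * ‖v‖ ^ 2 - 2 * ⟪v, a • g⟫ := by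
  rw [mul_assoc, mul_assoc, ← mul_sub, mul_norm_sub_inv_smul_sq_sub_mul_norm_inv_smul_sq hc,
    real_inner_smul_right]
  ring

end Pointwise

section Integrals

variable {X Y E : Type*} [MeasurableSpace X] [MeasurableSpace Y] {μ : Measure X} {ν : Measure Y}
  [NormedAddCommGroup E] [InnerProductSpace ℝ E]

theorem integral_mul_const_sub_two_inner [CompleteSpace E] {f : X → ℝ} {g : X → E}
    (hf : Integrable f μ) (hg : Integrable g μ) (c : ℝ) (v : E) :
    ∫ x, (f x * c - 2 * ⟪v, g x⟫) ∂μ = (∫ x, f x ∂μ) * c - 2 * ⟪v, ∫ x, g x ∂μ⟫ := by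
  rw [integral_sub (hf.mul_const c) ((hg.const_inner v).const_mul 2), integral_mul_const,
    integral_const_mul, integral_inner hg]

/-- `D` plays the role of `∇P` and `G x` that of `∇ (K x)`; only `D = ∫ a • G dμ` is used. -/
theorem integral_explicit_score_sub_denoising_score [CompleteSpace E] [SFinite μ] [SFinite ν]
    (a : X → ℝ) (K : X → Y → ℝ) (G : X → Y → E) (P : Y → ℝ) (D : Y → E) (s : Y → E)
    (hKne : ∀ x y, K x y ≠ 0) (hPne : ∀ y, P y ≠ 0)
    (hP : ∀ y, P y = ∫ x, a x * K x y ∂μ) (hD : ∀ y, D y = ∫ x, a x • G x y ∂μ)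
    (haK : ∀ y, Integrable (fun x => a x * K x y) μ)
    (haG : ∀ y, Integrable (fun x => a x • G x y) μ)
    (hJ₁ : Integrable (fun y => P y * ‖s y - (P y)⁻¹ • D y‖ ^ 2) ν)
    (hC₁ : Integrable (fun y => P y * ‖(P y)⁻¹ • D y‖ ^ 2) ν)
    (hJ₂ : Integrable (fun q : X × Y =>
      a q.1 * K q.1 q.2 * ‖s q.2 - (K q.1 q.2)⁻¹ • G q.1 q.2‖ ^ 2) (μ.prod ν))
    (hC₂ : Integrable (fun q : X × Y =>
      a q.1 * K q.1 q.2 * ‖(K q.1 q.2)⁻¹ • G q.1 q.2‖ ^ 2) (μ.prod ν)) :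
    (∫ y, P y * ‖s y - (P y)⁻¹ • D y‖ ^ 2 ∂ν) -
        (∫ y, ∫ x, a x * K x y * ‖s y - (K x y)⁻¹ • G x y‖ ^ 2 ∂μ ∂ν) =
      (∫ y, P y * ‖(P y)⁻¹ • D y‖ ^ 2 ∂ν) -
        (∫ y, ∫ x, a x * K x y * ‖(K x y)⁻¹ • G x y‖ ^ 2 ∂μ ∂ν) := by
  have hexplicit : (∫ y, P y * ‖s y - (P y)⁻¹ • D y‖ ^ 2 ∂ν) -
      (∫ y, P y * ‖(P y)⁻¹ • D y‖ ^ 2 ∂ν) = ∫ y, (P y * ‖s y‖ ^ 2 - 2 * ⟪s y, D y⟫) ∂ν := by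
    rw [← integral_sub hJ₁ hC₁]
    exact integral_congr_ae (.of_forall fun y =>
      mul_norm_sub_inv_smul_sq_sub_mul_norm_inv_smul_sq (hPne y) (s y) (D y))
  have hpointwise : ∀ q : X × Y,
      a q.1 * K q.1 q.2 * ‖s q.2 - (K q.1 q.2)⁻¹ • G q.1 q.2‖ ^ 2 -
        a q.1 * K q.1 q.2 * ‖(K q.1 q.2)⁻¹ • G q.1 q.2‖ ^ 2 =
      a q.1 * K q.1 q.2 * ‖s q.2‖ ^ 2 - 2 * ⟪s q.2, a q.1 • G q.1 q.2⟫ := fun q =>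
    mul_mul_norm_sub_inv_smul_sq_sub (hKne q.1 q.2) (s q.2) (G q.1 q.2)
  have hdenoising : (∫ y, ∫ x, a x * K x y * ‖s y - (K x y)⁻¹ • G x y‖ ^ 2 ∂μ ∂ν) -
      (∫ y, ∫ x, a x * K x y * ‖(K x y)⁻¹ • G x y‖ ^ 2 ∂μ ∂ν) =
      ∫ y, (P y * ‖s y‖ ^ 2 - 2 * ⟪s y, D y⟫) ∂ν := by
    rw [← integral_prod_symm _ hJ₂, ← integral_prod_symm _ hC₂, ← integral_sub hJ₂ hC₂,
      integral_congr_ae (.of_forall hpointwise),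
      integral_prod_symm _ ((hJ₂.sub hC₂).congr (.of_forall hpointwise))]
    refine integral_congr_ae (.of_forall fun y => ?_)
    dsimp only
    rw [hP, hD]
    exact integral_mul_const_sub_two_inner (haK y) (haG y) _ (s y)
  rw [sub_eq_sub_iff_sub_eq_sub, hexplicit, hdenoising]

end Integrals

theorem denoising_score_matching_equiv_general
    (n : ℕ)
    (p₀ : EuclideanSpace ℝ (Fin n) → ℝ)
    (k : EuclideanSpace ℝ (Fin n) → EuclideanSpace ℝ (Fin n) → ℝ)
    (hkpos : ∀ x₀ x, 0 < k x₀ x)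
    (p_t : EuclideanSpace ℝ (Fin n) → ℝ)
    (hpt : ∀ x, p_t x = ∫ x₀, p₀ x₀ * k x₀ x)
    (s : EuclideanSpace ℝ (Fin n) → EuclideanSpace ℝ (Fin n))
    -- (i)
    (hptpos : ∀ x, 0 < p_t x)
    (hint : ∀ x, Integrable (fun x₀ => p₀ x₀ * k x₀ x))
    -- (ii) differentiation under the integral sign
    (hgradint : ∀ x, Integrable (fun x₀ => p₀ x₀ • gradient (k x₀) x))
    (hgrad : ∀ x, HasGradientAt p_t (∫ x₀, p₀ x₀ • gradient (k x₀) x) x)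
    -- (iii) integrability of all objective integrands
    (hJ₁int : Integrable (fun x => p_t x * ‖s x - (p_t x)⁻¹ • gradient p_t x‖ ^ 2))
    (hC₁int : Integrable (fun x => p_t x * ‖(p_t x)⁻¹ • gradient p_t x‖ ^ 2))
    (hJ₂int : Integrable (fun q : EuclideanSpace ℝ (Fin n) × EuclideanSpace ℝ (Fin n) =>
      p₀ q.1 * k q.1 q.2 * ‖s q.2 - (k q.1 q.2)⁻¹ • gradient (k q.1) q.2‖ ^ 2))
    (hC₂int : Integrable (fun q : EuclideanSpace ℝ (Fin n) × EuclideanSpace ℝ (Fin n) =>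
      p₀ q.1 * k q.1 q.2 * ‖(k q.1 q.2)⁻¹ • gradient (k q.1) q.2‖ ^ 2)) :
    (∫ x, p_t x * ‖s x - (p_t x)⁻¹ • gradient p_t x‖ ^ 2) -
        (∫ x, ∫ x₀, p₀ x₀ * k x₀ x * ‖s x - (k x₀ x)⁻¹ • gradient (k x₀) x‖ ^ 2) =
      (∫ x, p_t x * ‖(p_t x)⁻¹ • gradient p_t x‖ ^ 2) -
        (∫ x, ∫ x₀, p₀ x₀ * k x₀ x * ‖(k x₀ x)⁻¹ • gradient (k x₀) x‖ ^ 2) := by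
  rw [Measure.volume_eq_prod] at hJ₂int hC₂int
  exact integral_explicit_score_sub_denoising_score p₀ k (fun x₀ => gradient (k x₀)) p_t
    (gradient p_t) s (fun x₀ x => (hkpos x₀ x).ne') (fun x => (hptpos x).ne') hpt
    (fun x => (hgrad x).gradient) hint hgradint hJ₁int hC₁int hJ₂int hC₂int

/-- Equivalence of explicit and denoising score matching (`J₂ = J₁ − C₁ + C₂`): under the
stated integrability and differentiation-under-the-integral assumptions, the explicit score
matching objective `Ĵ₁(s) = ∫ p_t ‖s − ∇ log p_t‖²` and the denoising score matching objective
`Ĵ₂(s) = ∫∫ p₀ k ‖s − ∇ log k‖²` satisfy `Ĵ₁(s) − Ĵ₂(s) = C₁ − C₂`, where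
`C₁ = ∫ p_t ‖∇ log p_t‖²` and `C₂ = ∫∫ p₀ k ‖∇ log k‖²` do not depend on `s`. -/
theorem denoising_score_matching_equiv
    (n : ℕ) (hn : 1 ≤ n)
    (p₀ : EuclideanSpace ℝ (Fin n) → ℝ) (hp₀meas : Measurable p₀) (hp₀ : ∀ x₀, 0 ≤ p₀ x₀)
    (k : EuclideanSpace ℝ (Fin n) → EuclideanSpace ℝ (Fin n) → ℝ)
    (hkpos : ∀ x₀ x, 0 < k x₀ x)
    (p_t : EuclideanSpace ℝ (Fin n) → ℝ)
    (hpt : ∀ x, p_t x = ∫ x₀, p₀ x₀ * k x₀ x)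
    (s : EuclideanSpace ℝ (Fin n) → EuclideanSpace ℝ (Fin n)) (hs : Measurable s)
    -- (i)
    (hptpos : ∀ x, 0 < p_t x)
    (hint : ∀ x, Integrable (fun x₀ => p₀ x₀ * k x₀ x))
    (hkdiff : ∀ x₀ x, DifferentiableAt ℝ (k x₀) x)
    -- (ii) differentiation under the integral sign
    (hgradint : ∀ x, Integrable (fun x₀ => p₀ x₀ • gradient (k x₀) x))
    (hgrad : ∀ x, HasGradientAt p_t (∫ x₀, p₀ x₀ • gradient (k x₀) x) x)
    -- (iii) integrability of all objective integrands
    (hJ₁int : Integrable (fun x => p_t x * ‖s x - (p_t x)⁻¹ • gradient p_t x‖ ^ 2))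
    (hC₁int : Integrable (fun x => p_t x * ‖(p_t x)⁻¹ • gradient p_t x‖ ^ 2))
    (hsint : Integrable (fun x => p_t x * ‖s x‖ ^ 2))
    (hJ₂int : Integrable (fun q : EuclideanSpace ℝ (Fin n) × EuclideanSpace ℝ (Fin n) =>
      p₀ q.1 * k q.1 q.2 * ‖s q.2 - (k q.1 q.2)⁻¹ • gradient (k q.1) q.2‖ ^ 2))
    (hC₂int : Integrable (fun q : EuclideanSpace ℝ (Fin n) × EuclideanSpace ℝ (Fin n) =>
      p₀ q.1 * k q.1 q.2 * ‖(k q.1 q.2)⁻¹ • gradient (k q.1) q.2‖ ^ 2))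
    (hsint₂ : Integrable (fun q : EuclideanSpace ℝ (Fin n) × EuclideanSpace ℝ (Fin n) =>
      p₀ q.1 * k q.1 q.2 * ‖s q.2‖ ^ 2))
    (hcrossint : Integrable (fun q : EuclideanSpace ℝ (Fin n) × EuclideanSpace ℝ (Fin n) =>
      p₀ q.1 * k q.1 q.2 * ⟪s q.2, (k q.1 q.2)⁻¹ • gradient (k q.1) q.2⟫)) :
    (∫ x, p_t x * ‖s x - (p_t x)⁻¹ • gradient p_t x‖ ^ 2) -
        (∫ x, ∫ x₀, p₀ x₀ * k x₀ x * ‖s x - (k x₀ x)⁻¹ • gradient (k x₀) x‖ ^ 2) =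
      (∫ x, p_t x * ‖(p_t x)⁻¹ • gradient p_t x‖ ^ 2) -
        (∫ x, ∫ x₀, p₀ x₀ * k x₀ x * ‖(k x₀ x)⁻¹ • gradient (k x₀) x‖ ^ 2) :=
  denoising_score_matching_equiv_general n p₀ k hkpos p_t hpt s hptpos hint hgradint hgrad hJ₁int
    hC₁int hJ₂int hC₂int
end
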